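/- arXiv:math/0205195 — 2 statements merged into one kernel-verified Lean document; each statement's English description precedes it below -/
import Mathlib

section
/- Let V be a finite-dimensional real normed space and let v be a smooth point of the unit sphere of V, with support functional σ_v. Then for all x, y ∈ V, lim_{t→+∞} (‖t·v − x‖ − ‖t·v − x − y‖) = σ_v(y); in particular this limit is independent of x, which expresses that the Busemann point of the metric boundary of V determined by the geodesic ray t ↦ t·v is a fixed point for the action of V on the boundary by translations. -/
/-!
For every `w`, the quantity `‖t • v - w‖ - t` is squeezed between `-σ w` (as `‖σ‖ = 1` and
`σ v = 1`) and `-τₜ w`, where `τₜ` is a functional of norm at most one attaining its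
norm at `t • v - w`.
Every cluster point of `τₜ` as `t → ∞` is a norm-one functional taking the value `1` at `v`;
by compactness of the dual unit ball and smoothness of `v`, `τₜ → σ`. Hence
`‖t • v - w‖ - t → -σ w`, and the theorem is the difference of this limit at `w = x` and
`w = x + y`.
-/

open Filter Topology

section

variable {V : Type*} [NormedAddCommGroup V] [NormedSpace ℝ V]

lemma StrongDual.apply_le_norm_of_norm_le_one {τ : StrongDual ℝ V} (hτ : ‖τ‖ ≤ 1) (x : V) :
    τ x ≤ ‖x‖ :=
  (le_abs_self _).trans (by simpa using τ.le_of_opNorm_le hτ x)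

lemma neg_apply_le_norm_smul_sub_sub_self {v : V} {τ : StrongDual ℝ V} (hτ : ‖τ‖ ≤ 1)
    (hτv : τ v = 1) (w : V) (t : ℝ) : -τ w ≤ ‖t • v - w‖ - t := by
  have := τ.apply_le_norm_of_norm_le_one hτ (t • v - w)
  simp only [map_sub, map_smul, hτv, smul_eq_mul, mul_one] at this
  linarith

lemma norm_smul_sub_sub_self_le_neg_apply {v w : V} (hv : ‖v‖ ≤ 1) {τ : StrongDual ℝ V}
    (hτ : ‖τ‖ ≤ 1) {t : ℝ} (ht : 0 ≤ t) (hτt : τ (t • v - w) = ‖t • v - w‖) :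
    ‖t • v - w‖ - t ≤ -τ w := by
  have hτv : τ v ≤ 1 := (τ.apply_le_norm_of_norm_le_one hτ v).trans hv
  rw [← hτt, map_sub, map_smul, smul_eq_mul]
  nlinarith

lemma one_sub_le_apply_of_apply_smul_sub_eq_norm {v w : V} (hv : ‖v‖ = 1) {τ : StrongDual ℝ V}
    (hτ : ‖τ‖ ≤ 1) {t : ℝ} (ht : 0 < t) (hτt : τ (t • v - w) = ‖t • v - w‖) :
    1 - 2 * ‖w‖ / t ≤ τ v := by
  have hnorm : t - ‖w‖ ≤ ‖t • v - w‖ := by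
    simpa [norm_smul, hv, abs_of_pos ht] using norm_sub_norm_le (t • v) w
  have hτw : -τ w ≤ ‖w‖ := by
    simpa using τ.apply_le_norm_of_norm_le_one hτ (-w)
  rw [map_sub, map_smul, smul_eq_mul] at hτt
  rw [sub_le_comm, le_div_iff₀ ht]
  nlinarith

lemma tendsto_apply_of_apply_smul_sub_eq_norm {v w : V} (hv : ‖v‖ = 1)
    {τ : ℝ → StrongDual ℝ V} (hτ : ∀ t, ‖τ t‖ ≤ 1)
    (hτt : ∀ t, τ t (t • v - w) = ‖t • v - w‖) :
    Tendsto (fun t => τ t v) atTop (𝓝 1) := by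
  have hlower : Tendsto (fun t : ℝ => 1 - 2 * ‖w‖ / t) atTop (𝓝 1) := by
    simpa using (tendsto_const_nhds (x := (1 : ℝ))).sub
      ((tendsto_const_nhds (x := 2 * ‖w‖)).div_atTop tendsto_id)
  refine tendsto_of_tendsto_of_tendsto_of_le_of_le' hlower tendsto_const_nhds ?_ ?_
  · filter_upwards [eventually_gt_atTop 0] with t ht
    exact one_sub_le_apply_of_apply_smul_sub_eq_norm hv (hτ t) ht (hτt t)
  · exact Eventually.of_forall fun t =>
      (StrongDual.apply_le_norm_of_norm_le_one (hτ t) v).trans hv.le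

lemma tendsto_support_functional_of_apply_smul_sub_eq_norm [FiniteDimensional ℝ V] {v w : V}
    (hv : ‖v‖ = 1) {σ : StrongDual ℝ V} (huniq : ∀ τ : StrongDual ℝ V, ‖τ‖ = 1 → τ v = 1 → τ = σ)
    {τ : ℝ → StrongDual ℝ V} (hτ : ∀ t, ‖τ t‖ ≤ 1)
    (hτt : ∀ t, τ t (t • v - w) = ‖t • v - w‖) :
    Tendsto τ atTop (𝓝 σ) := by
  refine (isCompact_closedBall (0 : StrongDual ℝ V) 1).tendsto_nhds_of_unique_mapClusterPt
    (Eventually.of_forall fun t => by simpa using hτ t) fun τ₀ hτ₀ hcluster => ?_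
  have hτ₀ : ‖τ₀‖ ≤ 1 := by simpa using hτ₀
  have hτ₀v : τ₀ v = 1 :=
    eq_of_nhds_neBot <| ((hcluster.continuousAt_comp
      (ContinuousLinearMap.apply ℝ ℝ v).continuous.continuousAt).clusterPt.mono
        (tendsto_apply_of_apply_smul_sub_eq_norm hv hτ hτt))
  refine huniq τ₀ (le_antisymm hτ₀ ?_) hτ₀v
  simpa [hτ₀v, hv] using τ₀.le_opNorm v

lemma tendsto_norm_smul_sub_sub_self [FiniteDimensional ℝ V] {v : V} (hv : ‖v‖ = 1)
    {σ : StrongDual ℝ V} (hσnorm : ‖σ‖ = 1) (hσv : σ v = 1)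
    (huniq : ∀ τ : StrongDual ℝ V, ‖τ‖ = 1 → τ v = 1 → τ = σ) (w : V) :
    Tendsto (fun t : ℝ => ‖t • v - w‖ - t) atTop (𝓝 (-σ w)) := by
  choose τ hτ hτt using fun t : ℝ => exists_dual_vector'' ℝ (t • v - w)
  have hτσ := tendsto_support_functional_of_apply_smul_sub_eq_norm hv huniq hτ hτt
  have hupper : Tendsto (fun t => -τ t w) atTop (𝓝 (-σ w)) :=
    (((ContinuousLinearMap.apply ℝ ℝ w).continuous.tendsto σ).comp hτσ).neg
  refine tendsto_of_tendsto_of_tendsto_of_le_of_le' tendsto_const_nhds hupper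
    (Eventually.of_forall (neg_apply_le_norm_smul_sub_sub_self hσnorm.le hσv w)) ?_
  filter_upwards [eventually_ge_atTop 0] with t ht
  exact norm_smul_sub_sub_self_le_neg_apply hv.le (hτ t) ht (hτt t)

end

/-- Proposition 6.3 of Rieffel: if `v` is a smooth point of the unit sphere of a
finite-dimensional real normed space `V`, with (unique) support functional `σ`, then for
all `x, y ∈ V`, `lim_{t→∞} (‖t·v − x‖ − ‖t·v − x − y‖) = σ(y)`; the limit does not
depend on `x`, so the Busemann point `b_v` is fixed by the translation action of `V` on
the metric boundary. -/
theorem stmt9 {V : Type*} [NormedAddCommGroup V] [NormedSpace ℝ V]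
    [FiniteDimensional ℝ V]
    (v : V) (hv : ‖v‖ = 1) (σ : V →L[ℝ] ℝ) (hσnorm : ‖σ‖ = 1) (hσv : σ v = 1)
    (huniq : ∀ τ : V →L[ℝ] ℝ, ‖τ‖ = 1 → τ v = 1 → τ = σ) :
    ∀ x y : V, Filter.Tendsto (fun t : ℝ => ‖t • v - x‖ - ‖t • v - x - y‖)
      Filter.atTop (nhds (σ y)) := by
  intro x y
  have h := (tendsto_norm_smul_sub_sub_self hv hσnorm hσv huniq x).sub
    (tendsto_norm_smul_sub_sub_self hv hσnorm hσv huniq (x + y))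
  simp only [sub_sub_sub_cancel_right, map_add, neg_sub_neg, add_sub_cancel_left, ← sub_sub] at h
  exact h
end

section
/- Let S be a finite subset of ℤ^d with S = −S and 0 ∉ S which generates ℤ^d, with word-length ℓ_S. Let σ : ℝ^d → ℝ be a linear functional with σ(s) ≤ 1 for all s ∈ S such that F = {s ∈ S : σ(s) = 1} is nonempty, let z_F = Σ_{s∈F} s and let G_F be the subgroup generated by F. Then for every u ∈ G_F and all y, z ∈ ℤ^d, the limits lim_{n→∞}(ℓ_S(n·z_F + z) − ℓ_S(n·z_F + z − y)) and lim_{n→∞}(ℓ_S(n·z_F + z + u) − ℓ_S(n·z_F + z + u − y)) exist and are equal. (That is, translation by any u ∈ G_F fixes every point of the orbit of the Busemann point b_F under the translation action of ℤ^d on the metric boundary.) -/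
/-!
Write `ℓ = ℓ_S`. Summing the elements of `F` gives a word of length `|F|` for `z_F`, and the
functional `σ` shows that no shorter word exists for any multiple `n • z_F`; so `n ↦ n • z_F`
is a geodesic ray. Along such a ray `ℓ(n • z_F + w) - ℓ(n • z_F)` is antitone (triangle
inequality) and bounded below by `-ℓ(-w)`, hence eventually equal to an integer `b(w)`, and
the two limits in the theorem are `b(z) - b(z - y)` and `b(z + u) - b(z + u - y)`.
For `s ∈ F` the word for `z_F` starts with `s`, which forces `b(w + s) = b(w) + 1`;
the translations changing `b` only by a constant form a subgroup, so it contains `G_F`.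
-/

/-- The word-length of `x ∈ ℤ^d` with respect to a generating set `S`: the least `n ≥ 0`
such that `x` is a sum of `n` (not necessarily distinct) elements of `S`. -/
noncomputable def wordLength {d : ℕ} (S : Finset (Fin d → ℤ)) (x : Fin d → ℤ) : ℕ :=
  sInf {n : ℕ | ∃ g : Fin n → (Fin d → ℤ), (∀ i, g i ∈ S) ∧ ∑ i, g i = x}

open Filter Topology

section QuasiPeriods

variable {G A : Type*} [AddGroup G] [AddCommGroup A]

def quasiPeriods (f : G → A) : AddSubgroup G where
  carrier := {u | ∃ c, ∀ w, f (w + u) = f w + c}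
  zero_mem' := ⟨0, fun w => by simp⟩
  add_mem' := by
    rintro u v ⟨c, hc⟩ ⟨c', hc'⟩
    exact ⟨c + c', fun w => by rw [← add_assoc, hc', hc, add_assoc]⟩
  neg_mem' := by
    rintro u ⟨c, hc⟩
    exact ⟨-c, fun w => by rw [eq_add_neg_iff_add_eq, ← hc, neg_add_cancel_right]⟩

lemma mem_quasiPeriods {f : G → A} {u : G} : u ∈ quasiPeriods f ↔ ∃ c, ∀ w, f (w + u) = f w + c :=
  Iff.rfl

end QuasiPeriods

variable {d : ℕ} {S : Finset (Fin d → ℤ)}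

variable (S) in
def IsSumOf (n : ℕ) (x : Fin d → ℤ) : Prop :=
  ∃ g : Fin n → (Fin d → ℤ), (∀ i, g i ∈ S) ∧ ∑ i, g i = x

namespace IsSumOf

lemma zero : IsSumOf S 0 0 := ⟨Fin.elim0, fun i => i.elim0, by simp⟩

lemma of_mem {s : Fin d → ℤ} (hs : s ∈ S) : IsSumOf S 1 s :=
  ⟨fun _ => s, fun _ => hs, by simp⟩

lemma add {m n : ℕ} {x y : Fin d → ℤ} (hx : IsSumOf S m x) (hy : IsSumOf S n y) :
    IsSumOf S (m + n) (x + y) := by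
  obtain ⟨g, hg, rfl⟩ := hx
  obtain ⟨h, hh, rfl⟩ := hy
  refine ⟨Fin.append g h, Fin.addCases (fun j => ?_) (fun j => ?_), by simp [Fin.sum_univ_add]⟩
  · simpa using hg j
  · simpa using hh j

lemma neg (hSsym : ∀ s ∈ S, -s ∈ S) {n : ℕ} {x : Fin d → ℤ} (hx : IsSumOf S n x) :
    IsSumOf S n (-x) := by
  obtain ⟨g, hg, rfl⟩ := hx
  exact ⟨fun i => -g i, fun i => hSsym _ (hg i), by simp⟩

lemma nsmul {n : ℕ} {x : Fin d → ℤ} (hx : IsSumOf S n x) (m : ℕ) :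
    IsSumOf S (m * n) (m • x) := by
  induction m with
  | zero => simpa using zero
  | succ m ih => simpa [add_mul, succ_nsmul] using ih.add hx

lemma finset_sum {T : Finset (Fin d → ℤ)} (hT : T ⊆ S) : IsSumOf S T.card (∑ t ∈ T, t) :=
  ⟨fun i => T.equivFin.symm i, fun i => hT (T.equivFin.symm i).2,
    (Equiv.sum_comp T.equivFin.symm ((↑) : T → Fin d → ℤ)).trans (Finset.sum_coe_sort T id)⟩

lemma exists_of_closure_eq_top (hSsym : ∀ s ∈ S, -s ∈ S)
    (hSgen : AddSubgroup.closure (S : Set (Fin d → ℤ)) = ⊤) (x : Fin d → ℤ) :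
    ∃ n, IsSumOf S n x := by
  induction (hSgen ▸ AddSubgroup.mem_top x : x ∈ AddSubgroup.closure (S : Set _))
    using AddSubgroup.closure_induction with
  | mem s hs => exact ⟨1, of_mem hs⟩
  | zero => exact ⟨0, zero⟩
  | add x y _ _ hx hy => obtain ⟨m, hx⟩ := hx; obtain ⟨n, hy⟩ := hy; exact ⟨m + n, hx.add hy⟩
  | neg x _ hx => obtain ⟨n, hx⟩ := hx; exact ⟨n, hx.neg hSsym⟩

lemma map_le {φ : (Fin d → ℤ) →+ ℝ} (hφ : ∀ s ∈ S, φ s ≤ 1) {n : ℕ} {x : Fin d → ℤ}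
    (hx : IsSumOf S n x) : φ x ≤ n := by
  obtain ⟨g, hg, rfl⟩ := hx
  calc φ (∑ i, g i) = ∑ i, φ (g i) := map_sum φ g _
    _ ≤ ∑ _i : Fin n, (1 : ℝ) := Finset.sum_le_sum fun i _ => hφ _ (hg i)
    _ = n := by simp

end IsSumOf

lemma wordLength_le {n : ℕ} {x : Fin d → ℤ} (hx : IsSumOf S n x) : wordLength S x ≤ n :=
  Nat.sInf_le hx

lemma isSumOf_wordLength (hSsym : ∀ s ∈ S, -s ∈ S)
    (hSgen : AddSubgroup.closure (S : Set (Fin d → ℤ)) = ⊤) (x : Fin d → ℤ) :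
    IsSumOf S (wordLength S x) x :=
  Nat.sInf_mem (IsSumOf.exists_of_closure_eq_top hSsym hSgen x)

lemma wordLength_add_le (hSsym : ∀ s ∈ S, -s ∈ S)
    (hSgen : AddSubgroup.closure (S : Set (Fin d → ℤ)) = ⊤) (x y : Fin d → ℤ) :
    wordLength S (x + y) ≤ wordLength S x + wordLength S y :=
  wordLength_le ((isSumOf_wordLength hSsym hSgen x).add (isSumOf_wordLength hSsym hSgen y))

lemma map_le_wordLength (hSsym : ∀ s ∈ S, -s ∈ S)
    (hSgen : AddSubgroup.closure (S : Set (Fin d → ℤ)) = ⊤) {φ : (Fin d → ℤ) →+ ℝ}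
    (hφ : ∀ s ∈ S, φ s ≤ 1) (x : Fin d → ℤ) : φ x ≤ wordLength S x :=
  (isSumOf_wordLength hSsym hSgen x).map_le hφ

lemma wordLength_eq_of_isSumOf (hSsym : ∀ s ∈ S, -s ∈ S)
    (hSgen : AddSubgroup.closure (S : Set (Fin d → ℤ)) = ⊤) {φ : (Fin d → ℤ) →+ ℝ}
    (hφ : ∀ s ∈ S, φ s ≤ 1) {n : ℕ} {x : Fin d → ℤ} (hx : IsSumOf S n x) (hφx : φ x = n) :
    wordLength S x = n :=
  le_antisymm (wordLength_le hx) (by exact_mod_cast hφx ▸ map_le_wordLength hSsym hSgen hφ x)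

section Busemann

-- Along a geodesic ray the sequence is antitone and bounded below, so this infimum is its
-- limit; otherwise `⨅` in `ℤ` takes a junk value.
variable (S) in
noncomputable def busemann (v w : Fin d → ℤ) : ℤ :=
  ⨅ n : ℕ, ((wordLength S (n • v + w) : ℤ) - wordLength S (n • v))

variable {v : Fin d → ℤ}

lemma eventually_wordLength_sub_eq_busemann (hSsym : ∀ s ∈ S, -s ∈ S)
    (hSgen : AddSubgroup.closure (S : Set (Fin d → ℤ)) = ⊤)
    (hv : ∀ n : ℕ, wordLength S (n • v) = n * wordLength S v) (w : Fin d → ℤ) :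
    ∀ᶠ n : ℕ in atTop, (wordLength S (n • v + w) : ℤ) - wordLength S (n • v) = busemann S v w := by
  have hanti : Antitone fun n : ℕ => (wordLength S (n • v + w) : ℤ) - wordLength S (n • v) := by
    refine antitone_nat_of_succ_le fun n => ?_
    have h := wordLength_add_le hSsym hSgen (n • v + w) v
    rw [add_right_comm, ← succ_nsmul] at h
    have := hv n
    have := hv (n + 1)
    push_cast [add_mul] at *
    omega
  have hbdd : BddBelow (Set.range fun n : ℕ =>
      (wordLength S (n • v + w) : ℤ) - wordLength S (n • v)) := by
    refine ⟨-wordLength S (-w), ?_⟩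
    rintro _ ⟨n, rfl⟩
    dsimp only
    have h := wordLength_add_le hSsym hSgen (n • v + w) (-w)
    rw [add_neg_cancel_right] at h
    omega
  have h := tendsto_atTop_ciInf hanti hbdd
  rwa [nhds_discrete, tendsto_pure] at h

lemma tendsto_wordLength_sub_wordLength (hSsym : ∀ s ∈ S, -s ∈ S)
    (hSgen : AddSubgroup.closure (S : Set (Fin d → ℤ)) = ⊤)
    (hv : ∀ n : ℕ, wordLength S (n • v) = n * wordLength S v) (w y : Fin d → ℤ) :
    Tendsto (fun n : ℕ => (wordLength S (n • v + w) : ℝ) - wordLength S (n • v + w - y)) atTop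
      (𝓝 ((busemann S v w - busemann S v (w - y) : ℤ) : ℝ)) := by
  refine tendsto_const_nhds.congr' ?_
  filter_upwards [eventually_wordLength_sub_eq_busemann hSsym hSgen hv w,
    eventually_wordLength_sub_eq_busemann hSsym hSgen hv (w - y)] with n hw hwy
  rw [← hw, ← hwy, ← add_sub_assoc]
  push_cast
  ring

lemma busemann_add (hSsym : ∀ s ∈ S, -s ∈ S)
    (hSgen : AddSubgroup.closure (S : Set (Fin d → ℤ)) = ⊤)
    (hv : ∀ n : ℕ, wordLength S (n • v) = n * wordLength S v) {s : Fin d → ℤ}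
    (hs : wordLength S s + wordLength S (v - s) ≤ wordLength S v) (w : Fin d → ℤ) :
    busemann S v (w + s) = busemann S v w + wordLength S s := by
  obtain ⟨n, hw, hws, hw'⟩ := ((eventually_wordLength_sub_eq_busemann hSsym hSgen hv w).and
    ((eventually_wordLength_sub_eq_busemann hSsym hSgen hv (w + s)).and
      ((tendsto_add_atTop_nat 1).eventually
        (eventually_wordLength_sub_eq_busemann hSsym hSgen hv w)))).exists
  have h₁ := wordLength_add_le hSsym hSgen (n • v + w) s
  have h₂ := wordLength_add_le hSsym hSgen (n • v + (w + s)) (v - s)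
  rw [add_assoc] at h₁
  rw [show n • v + (w + s) + (v - s) = (n + 1) • v + w by rw [succ_nsmul]; abel] at h₂
  have := hv n
  have := hv (n + 1)
  push_cast [add_mul] at *
  omega

end Busemann

section Face

variable {φ : (Fin d → ℤ) →+ ℝ} {F : Finset (Fin d → ℤ)}

lemma wordLength_nsmul_sum_face (hSsym : ∀ s ∈ S, -s ∈ S)
    (hSgen : AddSubgroup.closure (S : Set (Fin d → ℤ)) = ⊤) (hφ : ∀ s ∈ S, φ s ≤ 1)
    (hFS : F ⊆ S) (hφF : ∀ s ∈ F, φ s = 1) (n : ℕ) :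
    wordLength S (n • ∑ s ∈ F, s) = n * F.card := by
  refine wordLength_eq_of_isSumOf hSsym hSgen hφ ((IsSumOf.finset_sum hFS).nsmul n) ?_
  rw [map_nsmul, map_sum, Finset.sum_congr rfl hφF]
  simp

lemma wordLength_add_wordLength_sub_le_of_mem_face (hSsym : ∀ s ∈ S, -s ∈ S)
    (hSgen : AddSubgroup.closure (S : Set (Fin d → ℤ)) = ⊤) (hφ : ∀ s ∈ S, φ s ≤ 1)
    (hFS : F ⊆ S) (hφF : ∀ s ∈ F, φ s = 1) {s : Fin d → ℤ} (hs : s ∈ F) :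
    wordLength S s + wordLength S (∑ t ∈ F, t - s) ≤ wordLength S (∑ t ∈ F, t) := by
  have h₁ : wordLength S s ≤ 1 := wordLength_le (IsSumOf.of_mem (hFS hs))
  have h₂ : wordLength S (∑ t ∈ F, t - s) ≤ (F.erase s).card := by
    rw [← Finset.sum_erase_eq_sub hs]
    exact wordLength_le (IsSumOf.finset_sum ((F.erase_subset s).trans hFS))
  have h₃ := wordLength_nsmul_sum_face hSsym hSgen hφ hFS hφF 1
  rw [one_nsmul, one_mul, ← Finset.card_erase_add_one hs] at h₃
  omega

end Face

theorem stmt17_general {d : ℕ} (S : Finset (Fin d → ℤ))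
    (hSsym : ∀ s ∈ S, -s ∈ S)
    (hSgen : AddSubgroup.closure (S : Set (Fin d → ℤ)) = ⊤)
    (σ : (Fin d → ℝ) →ₗ[ℝ] ℝ)
    (hσ : ∀ s ∈ S, σ (fun i => (s i : ℝ)) ≤ 1)
    (F : Finset (Fin d → ℤ))
    (hF : ∀ s : Fin d → ℤ, s ∈ F ↔ s ∈ S ∧ σ (fun i => (s i : ℝ)) = 1)
    (zF : Fin d → ℤ) (hzF : zF = ∑ s ∈ F, s) :
    ∀ u ∈ AddSubgroup.closure (F : Set (Fin d → ℤ)), ∀ y z : Fin d → ℤ,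
      ∃ l : ℝ,
        Filter.Tendsto
          (fun n : ℕ =>
            (wordLength S (n • zF + z) : ℝ) - (wordLength S (n • zF + z - y) : ℝ))
          Filter.atTop (nhds l) ∧
        Filter.Tendsto
          (fun n : ℕ =>
            (wordLength S (n • zF + z + u) : ℝ) -
              (wordLength S (n • zF + z + u - y) : ℝ))
          Filter.atTop (nhds l) := by
  intro u hu y z
  let φ : (Fin d → ℤ) →+ ℝ := σ.toAddMonoidHom.comp ((Int.castAddHom ℝ).compLeft (Fin d))
  have hFS : F ⊆ S := fun s hs => ((hF s).1 hs).1
  have hφF : ∀ s ∈ F, φ s = 1 := fun s hs => ((hF s).1 hs).2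
  have hray : ∀ n : ℕ, wordLength S (n • zF) = n * wordLength S zF := fun n => by
    have h₁ := wordLength_nsmul_sum_face hSsym hSgen hσ hFS hφF 1
    rw [one_nsmul, one_mul] at h₁
    rw [hzF, h₁, wordLength_nsmul_sum_face hSsym hSgen hσ hFS hφF]
  have hperiod : u ∈ quasiPeriods (busemann S zF) := by
    refine AddSubgroup.closure_le _ |>.2 (fun s hs => ?_) hu
    exact mem_quasiPeriods.2 ⟨_, busemann_add hSsym hSgen hray
      (hzF ▸ wordLength_add_wordLength_sub_le_of_mem_face hSsym hSgen hσ hFS hφF hs)⟩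
  obtain ⟨c, hc⟩ := mem_quasiPeriods.1 hperiod
  refine ⟨_, tendsto_wordLength_sub_wordLength hSsym hSgen hray z y, ?_⟩
  have h := tendsto_wordLength_sub_wordLength hSsym hSgen hray (z + u) y
  rw [show z + u - y = z - y + u by abel, hc, hc, add_sub_add_right_eq_sub] at h
  simpa only [← add_assoc] using h

/-- Proposition 8.6 of Rieffel: translation by any `u ∈ G_F` fixes every point of the
orbit of the Busemann point `b_F` under the translation action of `ℤ^d` on the metric
boundary: for all `y, z ∈ ℤ^d` the limits of `ℓ_S(n·z_F + z) − ℓ_S(n·z_F + z − y)` and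
`ℓ_S(n·z_F + z + u) − ℓ_S(n·z_F + z + u − y)` exist and agree. -/
theorem stmt17 {d : ℕ} (S : Finset (Fin d → ℤ))
    (hSsym : ∀ s ∈ S, -s ∈ S) (hS0 : (0 : Fin d → ℤ) ∉ S)
    (hSgen : AddSubgroup.closure (S : Set (Fin d → ℤ)) = ⊤)
    (σ : (Fin d → ℝ) →ₗ[ℝ] ℝ)
    (hσ : ∀ s ∈ S, σ (fun i => (s i : ℝ)) ≤ 1)
    (F : Finset (Fin d → ℤ))
    (hF : ∀ s : Fin d → ℤ, s ∈ F ↔ s ∈ S ∧ σ (fun i => (s i : ℝ)) = 1)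
    (hFne : F.Nonempty)
    (zF : Fin d → ℤ) (hzF : zF = ∑ s ∈ F, s) :
    ∀ u ∈ AddSubgroup.closure (F : Set (Fin d → ℤ)), ∀ y z : Fin d → ℤ,
      ∃ l : ℝ,
        Filter.Tendsto
          (fun n : ℕ =>
            (wordLength S (n • zF + z) : ℝ) - (wordLength S (n • zF + z - y) : ℝ))
          Filter.atTop (nhds l) ∧
        Filter.Tendsto
          (fun n : ℕ =>
            (wordLength S (n • zF + z + u) : ℝ) -
              (wordLength S (n • zF + z + u - y) : ℝ))
          Filter.atTop (nhds l) :=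
  stmt17_general S hSsym hSgen σ hσ F hF zF hzF
end
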